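/- arXiv:2510.12066 — 5 statements merged into one kernel-verified Lean document; each statement's English description precedes it below -/
import Mathlib

section
/- For every stochastic dynamical system ν on a countable type S and all states x, y, z ∈ S, the proper time is submultiplicative: τ_ν(x→z) ≤ τ_ν(x→y) · τ_ν(y→z) (as an inequality in [0,∞]). In particular, concatenating a trajectory from x to y realizing (or approximating) τ_ν(x→y) with one from y to z realizing τ_ν(y→z) yields a trajectory whose length-to-probability ratio is at most the product, since the concatenation has length T₁ + T₂ − 1 ≤ T₁·T₂ and probability ν₁·ν₂. -/
/-!
Concatenating a trajectory `l ++ [y]` from `x` to `y` with a trajectory `y :: t` from `y` to `z`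
gives the trajectory `l ++ y :: t` from `x` to `z`, whose probability is the product of the two
probabilities and whose length `T₁ + T₂ - 1` is at most `T₁ * T₂`. Taking infima gives the claim,
except that in `ℝ≥0∞` an infimum over an empty set is `∞` and `∞ * 0 = 0`; stochasticity rules
this out, since `ν ≤ 1` forces every proper time to be at least `1`.
-/

open scoped ENNReal NNReal
/-- The probability of a trajectory `h = (s₁, …, sₙ)` under the transition kernel `ν`:
the product of the transition probabilities along adjacent pairs
(so a length-1 trajectory has probability 1). -/
def trajProb {S : Type*} (ν : S → S → NNReal) (h : List S) : NNReal :=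
  ((h.zip h.tail).map fun p => ν p.1 p.2).prod

/-- The proper time `τ_ν(u → v)`: the infimum, over all trajectories `h` from `u` to `v`
with positive probability, of `T(h) / ν(h)`, taken in `[0, ∞]`
(so it is `∞` if no such trajectory exists). -/
noncomputable def properTime {S : Type*} (ν : S → S → NNReal) (u v : S) : ℝ≥0∞ :=
  ⨅ h ∈ {h : List S | h.head? = some u ∧ h.getLast? = some v ∧ 0 < trajProb ν h},
    (h.length : ℝ≥0∞) / (trajProb ν h : ℝ≥0∞)

lemma NNReal.le_one_of_tsum_eq_one {α : Type*} {f : α → ℝ≥0} (hf : ∑' a, f a = 1) (a : α) :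
    f a ≤ 1 := by
  have hs : Summable f := by
    by_contra h
    simp [tsum_eq_zero_of_not_summable h] at hf
  exact hf ▸ hs.le_tsum' a

lemma ENNReal.le_iInf_mul_iInf_of_ne_zero {ι κ : Type*} {a : ℝ≥0∞} {f : ι → ℝ≥0∞}
    {g : κ → ℝ≥0∞} (hf : ⨅ i, f i ≠ 0) (hg : ⨅ j, g j ≠ 0) (H : ∀ i j, a ≤ f i * g j) :
    a ≤ (⨅ i, f i) * ⨅ j, g j := by
  by_cases hf_top : ⨅ i, f i = ∞
  · simp [hf_top, ENNReal.top_mul hg]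
  by_cases hg_top : ⨅ j, g j = ∞
  · simp [hg_top, ENNReal.mul_top hf]
  refine ENNReal.le_iInf_mul_iInf ?_ ?_ H
  · simpa using hf_top
  · simpa using hg_top

section
variable {S : Type*} (ν : S → S → ℝ≥0)

def trajectories (u v : S) : Set (List S) :=
  {h | h.head? = some u ∧ h.getLast? = some v ∧ 0 < trajProb ν h}

lemma properTime_eq_iInf (u v : S) :
    properTime ν u v = ⨅ h : trajectories ν u v, (h.1.length : ℝ≥0∞) / trajProb ν h.1 := by
  rw [properTime, iInf_subtype']
  rfl

lemma trajProb_append_cons (l : List S) (y : S) (t : List S) :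
    trajProb ν (l ++ y :: t) = trajProb ν (l ++ [y]) * trajProb ν (y :: t) := by
  induction l with
  | nil => simp [trajProb]
  | cons a l ih => cases l <;> simp_all [trajProb, mul_assoc]

lemma trajProb_le_one (hν : ∀ s t, ν s t ≤ 1) (h : List S) : trajProb ν h ≤ 1 := by
  simpa [trajProb] using List.prod_le_pow_card ((h.zip h.tail).map fun p => ν p.1 p.2) 1
    (List.forall_mem_map.2 fun p _ => hν p.1 p.2)

lemma one_le_properTime (hν : ∀ s t, ν s t ≤ 1) (u v : S) : 1 ≤ properTime ν u v := by
  refine le_iInf₂ fun h ⟨hu, _, hpos⟩ => ?_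
  have hlen : 1 ≤ h.length := List.length_pos_iff.2 (by rintro rfl; simp at hu)
  rw [ENNReal.le_div_iff_mul_le (.inl (by simpa using hpos.ne')) (.inl ENNReal.coe_ne_top), one_mul]
  calc (trajProb ν h : ℝ≥0∞) ≤ 1 := by exact_mod_cast trajProb_le_one ν hν h
    _ ≤ h.length := by exact_mod_cast hlen

lemma properTime_le_mul_of_mem {x y z : S} {h₁ h₂ : List S}
    (h₁_mem : h₁ ∈ trajectories ν x y) (h₂_mem : h₂ ∈ trajectories ν y z) :
    properTime ν x z ≤ h₁.length / trajProb ν h₁ * (h₂.length / trajProb ν h₂) := by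
  obtain ⟨hx, hy, hp₁⟩ := h₁_mem
  obtain ⟨hy', hz, hp₂⟩ := h₂_mem
  obtain ⟨l, rfl⟩ := List.getLast?_eq_some_iff.1 hy
  obtain ⟨t, rfl⟩ := List.head?_eq_some_iff.1 hy'
  have hprob := trajProb_append_cons ν l y t
  have hmem : l ++ y :: t ∈ trajectories ν x z := by
    refine ⟨?_, ?_, hprob ▸ mul_pos hp₁ hp₂⟩
    · cases l <;> simpa using hx
    · simpa [List.getLast?_append] using hz
  have hlen : (l ++ y :: t).length ≤ (l ++ [y]).length * (y :: t).length := by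
    simp only [List.length_append, List.length_cons, List.length_nil]
    nlinarith
  calc properTime ν x z ≤ (l ++ y :: t).length / trajProb ν (l ++ y :: t) := iInf₂_le _ hmem
    _ ≤ (l ++ [y]).length * (y :: t).length / (trajProb ν (l ++ [y]) * trajProb ν (y :: t)) := by
      rw [hprob, ENNReal.coe_mul]
      gcongr
      exact_mod_cast hlen
    _ = _ := ENNReal.mul_div_mul_comm (.inl (by simpa using hp₁.ne')) (.inl ENNReal.coe_ne_top)

end

theorem properTime_submultiplicative_general {S : Type*}
    (ν : S → S → NNReal) (hν : ∀ s : S, ∑' t : S, ν s t = 1)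
    (x y z : S) :
    properTime ν x z ≤ properTime ν x y * properTime ν y z := by
  have hle : ∀ s t, ν s t ≤ 1 := fun s => NNReal.le_one_of_tsum_eq_one (hν s)
  have hxy : properTime ν x y ≠ 0 := (zero_lt_one.trans_le (one_le_properTime ν hle x y)).ne'
  have hyz : properTime ν y z ≠ 0 := (zero_lt_one.trans_le (one_le_properTime ν hle y z)).ne'
  rw [properTime_eq_iInf] at hxy hyz
  rw [properTime_eq_iInf ν x y, properTime_eq_iInf ν y z]
  exact ENNReal.le_iInf_mul_iInf_of_ne_zero hxy hyz fun h₁ h₂ =>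
    properTime_le_mul_of_mem ν h₁.2 h₂.2

/-- **Proper time is submultiplicative.** For every stochastic dynamical system `ν` on a
countable type `S` and all states `x, y, z`,
`τ_ν(x→z) ≤ τ_ν(x→y) · τ_ν(y→z)` (as an inequality in `[0,∞]`). -/
theorem properTime_submultiplicative {S : Type*} [Countable S]
    (ν : S → S → NNReal) (hν : ∀ s : S, ∑' t : S, ν s t = 1)
    (x y z : S) :
    properTime ν x z ≤ properTime ν x y * properTime ν y z :=
  properTime_submultiplicative_general ν hν x y z
end

section
/- Let ν be a stochastic dynamical system on a countable type S, and let u, w, v ∈ S. If the one-step transition probability from u to w satisfies ν(u, w) = p > 0, then τ_ν(u→v) ≤ (2/p) · τ_ν(w→v). (This is the quantitative core of the existence of a universal solver: a solver that first samples a program state w = x[A] with prior probability m(A) = p and then runs from it is slowed down by at most the factor 2/m(A) relative to the proper time from w.) -/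
open scoped ENNReal NNReal
/-!
Prepending the step `u → w` to a trajectory from `w` to `v` multiplies its probability by
`ν u w = p` and at most doubles its length, since every trajectory has length at least one;
so each ratio `T(h) / ν(h)` over trajectories from `w` is matched, up to the factor `2 / p`,
by one over trajectories from `u`.
-/

section

variable {S : Type*} (ν : S → S → NNReal)

@[simp]
lemma trajProb_cons_cons (u w : S) (t : List S) :
    trajProb ν (u :: w :: t) = ν u w * trajProb ν (w :: t) := by
  simp [trajProb]

lemma properTime_le_length_div_trajProb {u v : S} {h : List S} (hu : h.head? = some u)
    (hv : h.getLast? = some v) (hpos : 0 < trajProb ν h) :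
    properTime ν u v ≤ (h.length : ℝ≥0∞) / (trajProb ν h : ℝ≥0∞) :=
  biInf_le _ ⟨hu, hv, hpos⟩

lemma length_div_trajProb_cons_cons_le (u w : S) (t : List S) :
    ((u :: w :: t).length : ℝ≥0∞) / (trajProb ν (u :: w :: t) : ℝ≥0∞) ≤
      2 / (ν u w : ℝ≥0∞) * (((w :: t).length : ℝ≥0∞) / (trajProb ν (w :: t) : ℝ≥0∞)) := by
  have hlen : ((u :: w :: t).length : ℝ≥0∞) ≤ 2 * (w :: t).length := by
    norm_cast
    simp only [List.length_cons]
    omega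
  calc ((u :: w :: t).length : ℝ≥0∞) / (trajProb ν (u :: w :: t) : ℝ≥0∞)
      ≤ 2 * (w :: t).length / ((ν u w : ℝ≥0∞) * trajProb ν (w :: t)) := by
        rw [trajProb_cons_cons, ENNReal.coe_mul]
        exact ENNReal.div_le_div_right hlen _
    _ = 2 / (ν u w : ℝ≥0∞) * (((w :: t).length : ℝ≥0∞) / (trajProb ν (w :: t) : ℝ≥0∞)) := by
        simp only [div_eq_mul_inv]
        rw [ENNReal.mul_inv (by simp) (by simp)]
        ring

lemma properTime_le_two_div_mul_properTime_of_ne_zero {u w : S} (huw : ν u w ≠ 0) (v : S) :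
    properTime ν u v ≤ 2 / (ν u w : ℝ≥0∞) * properTime ν w v := by
  have hc₀ : 2 / (ν u w : ℝ≥0∞) ≠ 0 := by simp
  have hc : 2 / (ν u w : ℝ≥0∞) ≠ ∞ := by simp [ENNReal.div_eq_top, huw]
  conv_rhs => rw [properTime]
  simp_rw [ENNReal.mul_iInf_of_ne hc₀ hc]
  refine le_iInf₂ fun h ⟨hw, hv, hpos⟩ => ?_
  obtain ⟨t, rfl⟩ : ∃ t, h = w :: t := List.head?_eq_some_iff.mp hw
  refine (properTime_le_length_div_trajProb ν rfl ?_ ?_).trans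
    (length_div_trajProb_cons_cons_le ν u w t)
  · simpa [List.getLast?_cons_cons] using hv
  · rw [trajProb_cons_cons]
    exact mul_pos (pos_iff_ne_zero.mpr huw) hpos

end

theorem properTime_le_two_div_mul_general {S : Type*}
    (ν : S → S → NNReal)
    (u w v : S) (p : NNReal) (hp : 0 < p) (hstep : ν u w = p) :
    properTime ν u v ≤ (2 / (p : ℝ≥0∞)) * properTime ν w v := by
  subst hstep
  exact properTime_le_two_div_mul_properTime_of_ne_zero ν hp.ne' v

/-- **Universal-solver slowdown bound.** If the one-step transition probability from `u`
to `w` is `ν u w = p > 0`, then `τ_ν(u→v) ≤ (2/p) · τ_ν(w→v)`. -/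
theorem properTime_le_two_div_mul {S : Type*} [Countable S]
    (ν : S → S → NNReal) (hν : ∀ s : S, ∑' t : S, ν s t = 1)
    (u w v : S) (p : NNReal) (hp : 0 < p) (hstep : ν u w = p) :
    properTime ν u v ≤ (2 / (p : ℝ≥0∞)) * properTime ν w v :=
  properTime_le_two_div_mul_general ν u w v p hp hstep
end

section
/- Let ν be a stochastic dynamical system on a countable type S, let u ∈ S, and let C ≥ 1 be a real number. Then the set of trajectories h starting at u with ν(h) > 0 and T(h)/ν(h) ≤ C is finite, with cardinality at most C·(1 + log C) (natural logarithm). (This is the counting bound underlying Levin tree search: any such trajectory has length t ≤ C and probability at least t/C, so there are at most C/t of them for each length t, and summing C/t over 1 ≤ t ≤ C gives at most C(1 + log C).) -/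
open scoped ENNReal NNReal
/-!
A trajectory `h` from `u` with `T(h) / ν(h) ≤ C` has length `t ≤ C` (as `ν(h) ≤ 1`) and
probability at least `t / C`. For each `t`, the probabilities of the trajectories of length `t`
from `u` sum to `1`, so by Markov's inequality at most `C / t` of them reach `t / C`.
Summing over `1 ≤ t ≤ ⌊C⌋` gives at most `C · H_⌊C⌋ ≤ C (1 + log C)` trajectories.
-/

theorem ENNReal.finite_and_ncard_le_of_tsum_le_one {ι : Type*} {a : ι → ℝ≥0}
    (ha : ∑' i, (a i : ℝ≥0∞) ≤ 1) {ε : ℝ} (hε : 0 < ε) :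
    {i | ε ≤ a i}.Finite ∧ ({i | ε ≤ a i}.ncard : ℝ) ≤ ε⁻¹ := by
  have hset : {i | ε ≤ a i} = {i | ENNReal.ofReal ε ≤ a i} := by
    ext i
    simp [ENNReal.ofReal_le_iff_le_toReal]
  obtain ⟨hfin, hcard⟩ := ENNReal.finset_card_const_le_le_of_tsum_le ENNReal.one_ne_top ha
    (ENNReal.ofReal_pos.mpr hε).ne'
  rw [hset, Set.ncard_eq_toFinset_card _ hfin]
  refine ⟨hfin, ?_⟩
  rw [one_div, ← ENNReal.ofReal_inv_of_pos hε] at hcard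
  simpa using (ENNReal.le_ofReal_iff_toReal_le (by simp) (by positivity)).mp hcard

theorem sum_range_floor_div_succ_le_mul_one_add_log {C : ℝ} (hC : 1 ≤ C) :
    ∑ n ∈ Finset.range ⌊C⌋₊, C / (n + 1) ≤ C * (1 + Real.log C) := by
  have hN : (0 : ℝ) < ⌊C⌋₊ := by exact_mod_cast Nat.floor_pos.mpr hC
  calc ∑ n ∈ Finset.range ⌊C⌋₊, C / (n + 1) = C * harmonic ⌊C⌋₊ := by
        simp [harmonic, Finset.mul_sum, div_eq_mul_inv]
    _ ≤ C * (1 + Real.log ⌊C⌋₊) := by gcongr; exact harmonic_le_one_add_log _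
    _ ≤ C * (1 + Real.log C) := by gcongr; exact Nat.floor_le (by linarith)

namespace trajProb

variable {S : Type*} {ν : S → S → ℝ≥0}

@[simp]
theorem singleton (a : S) : trajProb ν [a] = 1 := rfl

@[simp]
theorem cons_cons (a b : S) (l : List S) :
    trajProb ν (a :: b :: l) = ν a b * trajProb ν (b :: l) := by
  simp [trajProb]

theorem tsum_cons_vector (hν : ∀ s, ∑' t, ν s t = 1) (n : ℕ) (s : S) :
    ∑' v : List.Vector S n, (trajProb ν (s :: v.toList) : ℝ≥0∞) = 1 := by
  induction n generalizing s with
  | zero => simp [tsum_eq_single List.Vector.nil fun v hv => (hv v.eq_nil).elim]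
  | succ n ih =>
    let e : S × List.Vector S n ≃ List.Vector S (n + 1) :=
      ⟨fun p => p.1 ::ᵥ p.2, fun v => (v.head, v.tail), fun p => by simp,
        List.Vector.cons_head_tail⟩
    rw [← e.tsum_eq]
    simp only [e, Equiv.coe_fn_mk, List.Vector.toList_cons, cons_cons, ENNReal.coe_mul]
    rw [ENNReal.tsum_prod
      (f := fun b (v : List.Vector S n) => ν s b * (trajProb ν (b :: v.toList) : ℝ≥0∞))]
    have hsum : Summable (ν s) := by
      by_contra h
      simpa [tsum_eq_zero_of_not_summable h] using hν s
    simp [ENNReal.tsum_mul_left, ih, ENNReal.tsum_coe_eq hsum.hasSum, hν]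

theorem le_one (hν : ∀ s, ∑' t, ν s t = 1) : ∀ h : List S, trajProb ν h ≤ 1
  | [] => le_rfl
  | s :: l => by
    have h := ENNReal.le_tsum (f := fun v : List.Vector S l.length =>
      (trajProb ν (s :: v.toList) : ℝ≥0∞)) ⟨l, rfl⟩
    rw [tsum_cons_vector hν] at h
    exact_mod_cast h

def heavyTails (ν : S → S → ℝ≥0) (u : S) (ε : ℝ) (n : ℕ) : Set (List.Vector S n) :=
  {v | ε ≤ trajProb ν (u :: v.toList)}

theorem subset_biUnion_heavyTails (hν : ∀ s, ∑' t, ν s t = 1) (u : S) {C : ℝ} (hC : 0 < C) :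
    {h : List S | h.head? = some u ∧ 0 < trajProb ν h ∧
        (h.length : ℝ) / (trajProb ν h : ℝ) ≤ C} ⊆
      ⋃ n ∈ Finset.range ⌊C⌋₊, (u :: ·.toList) '' heavyTails ν u (((n : ℝ) + 1) / C) n := by
  rintro h ⟨hhead, hpos, hle⟩
  obtain ⟨l, rfl⟩ := List.head?_eq_some_iff.mp hhead
  have hp1 : (trajProb ν (u :: l) : ℝ) ≤ 1 := le_one hν _
  have hlen : (l.length + 1 : ℝ) ≤ C * trajProb ν (u :: l) := by
    simpa using (div_le_iff₀ (NNReal.coe_pos.mpr hpos)).mp hle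
  simp only [Set.mem_iUnion, Finset.mem_range, Set.mem_image]
  refine ⟨l.length, ?_, ⟨l, rfl⟩, ?_, rfl⟩
  · exact Nat.lt_iff_add_one_le.mpr <| Nat.le_floor <| by push_cast; nlinarith
  · exact (div_le_iff₀' hC).mpr hlen

end trajProb

theorem finite_fast_trajectories_general {S : Type*}
    (ν : S → S → NNReal) (hν : ∀ s : S, ∑' t : S, ν s t = 1)
    (u : S) (C : ℝ) (hC : 1 ≤ C) :
    {h : List S | h.head? = some u ∧ 0 < trajProb ν h ∧
        (h.length : ℝ) / (trajProb ν h : ℝ) ≤ C}.Finite ∧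
    (Nat.card {h : List S | h.head? = some u ∧ 0 < trajProb ν h ∧
        (h.length : ℝ) / (trajProb ν h : ℝ) ≤ C} : ℝ)
      ≤ C * (1 + Real.log C) := by
  have hC0 : 0 < C := by linarith
  have heavy (n : ℕ) := ENNReal.finite_and_ncard_le_of_tsum_le_one
    (trajProb.tsum_cons_vector hν n u).le (ε := ((n : ℝ) + 1) / C) (by positivity)
  set cover := ⋃ n ∈ Finset.range ⌊C⌋₊,
    (u :: ·.toList) '' trajProb.heavyTails ν u (((n : ℝ) + 1) / C) n
  have hcover := trajProb.subset_biUnion_heavyTails hν u hC0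
  have hfin : cover.Finite :=
    (Finset.finite_toSet _).biUnion fun n _ => (heavy n).1.image _
  refine ⟨hfin.subset hcover, ?_⟩
  have hcard := (Set.ncard_le_ncard hcover hfin).trans <|
    (Finset.set_ncard_biUnion_le _ _).trans <|
      Finset.sum_le_sum fun n _ => Set.ncard_image_le (heavy n).1
  rw [Nat.card_coe_set_eq]
  calc _ ≤ ((∑ n ∈ Finset.range ⌊C⌋₊,
          (trajProb.heavyTails ν u (((n : ℝ) + 1) / C) n).ncard : ℕ) : ℝ) := Nat.cast_le.mpr hcard
    _ ≤ ∑ n ∈ Finset.range ⌊C⌋₊, C / (n + 1) := by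
      push_cast
      gcongr with n
      exact (heavy n).2.trans_eq (inv_div _ _)
    _ ≤ C * (1 + Real.log C) := sum_range_floor_div_succ_le_mul_one_add_log hC

/-- **Levin-search counting bound.** For every state `u` and every real `C ≥ 1`, the set of
trajectories `h` starting at `u` with `ν(h) > 0` and `T(h)/ν(h) ≤ C` is finite, with at most
`C · (1 + log C)` elements (natural logarithm). -/
theorem finite_fast_trajectories {S : Type*} [Countable S]
    (ν : S → S → NNReal) (hν : ∀ s : S, ∑' t : S, ν s t = 1)
    (u : S) (C : ℝ) (hC : 1 ≤ C) :
    {h : List S | h.head? = some u ∧ 0 < trajProb ν h ∧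
        (h.length : ℝ) / (trajProb ν h : ℝ) ≤ C}.Finite ∧
    (Nat.card {h : List S | h.head? = some u ∧ 0 < trajProb ν h ∧
        (h.length : ℝ) / (trajProb ν h : ℝ) ≤ C} : ℝ)
      ≤ C * (1 + Real.log C) :=
  finite_fast_trajectories_general ν hν u C hC
end

section
/- Time-weighted sampling: Let H be a countable type, p : H → ℝ≥0 with ∑' h, p(h) = 1, and T : H → ℝ with T(h) ≥ 1 for all h. Set Z = ∑' h, p(h)/T(h) (so 0 < Z ≤ 1) and define the probability mass function q(h) = p(h)/(Z·T(h)). Fix h* ∈ H with p(h*) > 0, let (Xᵢ)_{i∈ℕ} be an i.i.d. sequence with law q on the countable product probability space, and let N be the least index i with Xᵢ = h* (which is almost surely finite). Then the expected total time until h* is first sampled is exactly E[∑_{i=1}^{N} T(Xᵢ)] = T(h*)/p(h*). -/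
/-!
Since `h⋆` is hit almost surely, the total time is a.s. `∑ᵢ 1{no hit before i} · T(Xᵢ)`.
The event "no hit before `i`" depends only on `X₀, …, X_{i-1}`, so by independence the `i`-th
term has expectation `(1 - s)ⁱ · E[T(X₀)]` with `s = q(h⋆)`. Summing the geometric series gives
`E[T(X₀)] / s`; here `E[T(X₀)] = ∑ p(h) / Z = 1 / Z` and `s = p(h⋆) / (Z · T(h⋆))`, so the
normalizer `Z` cancels.
-/

open MeasureTheory ProbabilityTheory Finset
open scoped ENNReal NNReal

lemma summable_of_tsum_ne_zero {ι M : Type*} [AddCommMonoid M] [TopologicalSpace M] {f : ι → M}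
    (hf : ∑' i, f i ≠ 0) : Summable f := by
  by_contra h
  exact hf (tsum_eq_zero_of_not_summable h)

section FirstHit

variable {Ω H : Type*}

/-- With the junk value `sInf ∅ = 0` when `A` is never hit. -/
noncomputable def firstHit (X : ℕ → Ω → H) (A : Set H) (ω : Ω) : ℕ := sInf {i | X i ω ∈ A}

variable {X : ℕ → Ω → H} {A : Set H}

lemma le_firstHit_iff {ω : Ω} (hω : ∃ i, X i ω ∈ A) {n : ℕ} :
    n ≤ firstHit X A ω ↔ ∀ j < n, X j ω ∉ A := by
  unfold firstHit
  rw [le_csInf_iff (s := {i | X i ω ∈ A}) (OrderBot.bddBelow _) hω]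
  exact forall_congr' fun j => by rw [← not_lt]; exact imp_not_comm

lemma firstHit_eq_zero_of_forall_notMem {ω : Ω} (hω : ∀ i, X i ω ∉ A) : firstHit X A ω = 0 := by
  simp [firstHit, hω]

lemma sum_range_firstHit_succ_eq_tsum {ω : Ω} (hω : ∃ i, X i ω ∈ A) (g : ℕ → Ω → ℝ≥0∞) :
    ∑ i ∈ range (firstHit X A ω + 1), g i ω =
      ∑' i, {ω | ∀ j < i, X j ω ∉ A}.indicator (g i) ω := by
  rw [tsum_eq_sum (s := range (firstHit X A ω + 1))]
  · refine sum_congr rfl fun i hi => (Set.indicator_of_mem ?_ _).symm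
    exact (le_firstHit_iff hω).1 (Nat.lt_succ_iff.1 (mem_range.1 hi))
  · intro i hi
    refine Set.indicator_of_notMem (fun h => hi ?_) _
    exact mem_range.2 (Nat.lt_succ_of_le ((le_firstHit_iff hω).2 h))

variable [MeasurableSpace Ω] [MeasurableSpace H]

lemma measurableSet_forall_lt_notMem (hX : ∀ i, Measurable (X i)) (hA : MeasurableSet A) (n : ℕ) :
    MeasurableSet {ω | ∀ j < n, X j ω ∉ A} := by
  simp only [Set.ofPred_forall]
  exact .iInter fun j => .iInter fun _ => (hX j hA).compl

lemma measurable_firstHit (hX : ∀ i, Measurable (X i)) (hA : MeasurableSet A) :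
    Measurable (firstHit X A) := by
  refine measurable_of_Ioi fun n => ?_
  have : firstHit X A ⁻¹' Set.Ioi n =
      {ω | ∃ i, X i ω ∈ A} ∩ {ω | ∀ j < n + 1, X j ω ∉ A} := by
    ext ω
    by_cases hω : ∃ i, X i ω ∈ A
    · rw [Set.mem_preimage, Set.mem_Ioi, Nat.lt_iff_add_one_le, le_firstHit_iff hω]
      exact (and_iff_right hω).symm
    · rw [not_exists] at hω
      simp [firstHit_eq_zero_of_forall_notMem hω, hω]
  rw [this, Set.ofPred_exists]
  exact (MeasurableSet.iUnion fun i => hX i hA).inter (measurableSet_forall_lt_notMem hX hA _)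

lemma measurable_sum_range_succ_of_measurable_bound {M : Type*} [AddCommMonoid M]
    [MeasurableSpace M] [MeasurableAdd₂ M] {N : Ω → ℕ} (hN : Measurable N) {g : ℕ → Ω → M}
    (hg : ∀ i, Measurable (g i)) : Measurable fun ω => ∑ i ∈ range (N ω + 1), g i ω :=
  (measurable_from_prod_countable_left (f := fun x : Ω × ℕ => ∑ i ∈ range (x.2 + 1), g i x.1)
    fun n => Finset.measurable_fun_sum (range (n + 1)) fun i _ => hg i).comp
    (measurable_id.prodMk hN)

variable {P : Measure Ω}

lemma measure_forall_lt_notMem (hindep : iIndepFun X P) (hA : MeasurableSet A) (n : ℕ) :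
    P {ω | ∀ j < n, X j ω ∉ A} = ∏ j ∈ range n, P (X j ⁻¹' Aᶜ) := by
  rw [← hindep.measure_inter_preimage_eq_mul (range n) fun _ _ => hA.compl]
  congr 1
  ext ω
  simp

lemma setLIntegral_forall_lt_notMem (hX : ∀ i, Measurable (X i)) (hindep : iIndepFun X P)
    (hA : MeasurableSet A) {f : H → ℝ≥0∞} (hf : Measurable f) (n : ℕ) :
    ∫⁻ ω in {ω | ∀ j < n, X j ω ∉ A}, f (X n ω) ∂P =
      P {ω | ∀ j < n, X j ω ∉ A} * ∫⁻ ω, f (X n ω) ∂P := by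
  let M : ℕ → MeasurableSpace Ω := fun j => MeasurableSpace.comap (X j) inferInstance
  have hM : ∀ j, M j ≤ ‹MeasurableSpace Ω› := fun j => (hX j).comap_le
  have hind : Indep (⨆ j ∈ Set.Iio n, M j) (⨆ j ∈ ({n} : Set ℕ), M j) P :=
    indep_iSup_of_disjoint hM hindep.iIndep (by simp)
  have hs : MeasurableSet[⨆ j ∈ Set.Iio n, M j] {ω | ∀ j < n, X j ω ∉ A} := by
    simp only [Set.ofPred_forall]
    exact .iInter fun j => .iInter fun hj =>
      le_iSup₂ (f := fun j (_ : j ∈ Set.Iio n) => M j) j hj _ ⟨Aᶜ, hA.compl, rfl⟩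
  have hXn : Measurable[⨆ j ∈ ({n} : Set ℕ), M j] (X n) :=
    (comap_measurable (X n)).mono (le_iSup₂ (f := fun j (_ : j ∈ ({n} : Set ℕ)) => M j) n rfl)
      le_rfl
  have hsm := measurableSet_forall_lt_notMem hX hA n
  calc ∫⁻ ω in {ω | ∀ j < n, X j ω ∉ A}, f (X n ω) ∂P
      = ∫⁻ ω, {ω | ∀ j < n, X j ω ∉ A}.indicator 1 ω * f (X n ω) ∂P := by
        rw [← lintegral_indicator hsm]
        congr with ω
        by_cases hω : ω ∈ {ω | ∀ j < n, X j ω ∉ A} <;> simp [hω]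
    _ = P {ω | ∀ j < n, X j ω ∉ A} * ∫⁻ ω, f (X n ω) ∂P := by
        rw [← lintegral_indicator_one hsm]
        exact lintegral_mul_eq_lintegral_mul_lintegral_of_independent_measurableSpace
          (iSup₂_le fun j _ => hM j) (iSup₂_le fun j _ => hM j) hind
          (@measurable_one ℝ≥0∞ Ω _ (⨆ j ∈ Set.Iio n, M j) _ |>.indicator hs) (hf.comp hXn)

lemma measure_forall_lt_notMem_of_identDistrib (hindep : iIndepFun X P)
    (hident : ∀ i, IdentDistrib (X i) (X 0) P P) (hA : MeasurableSet A) (n : ℕ) :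
    P {ω | ∀ j < n, X j ω ∉ A} = P (X 0 ⁻¹' Aᶜ) ^ n := by
  rw [measure_forall_lt_notMem hindep hA,
    prod_congr rfl fun j _ => (hident j).measure_mem_eq hA.compl, prod_const, card_range]

variable [IsProbabilityMeasure P]

lemma ae_exists_mem_of_identDistrib (hX : ∀ i, Measurable (X i)) (hindep : iIndepFun X P)
    (hident : ∀ i, IdentDistrib (X i) (X 0) P P) (hA : MeasurableSet A)
    (hA0 : P (X 0 ⁻¹' A) ≠ 0) : ∀ᵐ ω ∂P, ∃ i, X i ω ∈ A := by
  have hr : P (X 0 ⁻¹' Aᶜ) < 1 := by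
    rw [Set.preimage_compl, prob_compl_eq_one_sub (hX 0 hA)]
    exact ENNReal.sub_lt_self ENNReal.one_ne_top one_ne_zero hA0
  simp only [ae_iff, not_exists]
  refine le_antisymm (ge_of_tendsto' (ENNReal.tendsto_pow_atTop_nhds_zero_of_lt_one hr)
    fun n => ?_) zero_le
  calc P {ω | ∀ i, X i ω ∉ A} ≤ P {ω | ∀ j < n, X j ω ∉ A} := measure_mono fun ω hω j _ => hω j
    _ = P (X 0 ⁻¹' Aᶜ) ^ n := measure_forall_lt_notMem_of_identDistrib hindep hident hA n

theorem lintegral_sum_range_firstHit_succ (hX : ∀ i, Measurable (X i)) (hindep : iIndepFun X P)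
    (hident : ∀ i, IdentDistrib (X i) (X 0) P P) (hA : MeasurableSet A)
    (hA0 : P (X 0 ⁻¹' A) ≠ 0) {f : H → ℝ≥0∞} (hf : Measurable f) :
    ∫⁻ ω, ∑ i ∈ range (firstHit X A ω + 1), f (X i ω) ∂P =
      (∫⁻ ω, f (X 0 ω) ∂P) / P (X 0 ⁻¹' A) := by
  have hr : 1 - P (X 0 ⁻¹' Aᶜ) = P (X 0 ⁻¹' A) := by
    rw [Set.preimage_compl, prob_compl_eq_one_sub (hX 0 hA),
      ENNReal.sub_sub_cancel ENNReal.one_ne_top prob_le_one]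
  calc ∫⁻ ω, ∑ i ∈ range (firstHit X A ω + 1), f (X i ω) ∂P
      = ∫⁻ ω, ∑' i, {ω | ∀ j < i, X j ω ∉ A}.indicator (fun ω => f (X i ω)) ω ∂P :=
        lintegral_congr_ae <| (ae_exists_mem_of_identDistrib hX hindep hident hA hA0).mono
          fun ω hω => sum_range_firstHit_succ_eq_tsum hω fun i ω => f (X i ω)
    _ = ∑' i, ∫⁻ ω in {ω | ∀ j < i, X j ω ∉ A}, f (X i ω) ∂P := by
        rw [lintegral_tsum fun i => (Measurable.indicator (f := fun ω => f (X i ω))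
          (hf.comp (hX i)) (measurableSet_forall_lt_notMem hX hA i)).aemeasurable]
        simp_rw [lintegral_indicator (measurableSet_forall_lt_notMem hX hA _)]
    _ = ∑' i, P (X 0 ⁻¹' Aᶜ) ^ i * ∫⁻ ω, f (X 0 ω) ∂P := by
        congr with i
        rw [setLIntegral_forall_lt_notMem hX hindep hA hf,
          measure_forall_lt_notMem_of_identDistrib hindep hident hA]
        exact congrArg _ ((hident i).comp hf).lintegral_eq
    _ = (∫⁻ ω, f (X 0 ω) ∂P) / P (X 0 ⁻¹' A) := by
        rw [ENNReal.tsum_mul_right, ENNReal.tsum_geometric, hr, div_eq_mul_inv, mul_comm]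

end FirstHit

section Countable

variable {Ω Ω' H : Type*} [MeasurableSpace Ω] [MeasurableSpace Ω'] [MeasurableSpace H]
  [Countable H] [MeasurableSingletonClass H]

lemma identDistrib_of_measure_preimage_singleton {μ : Measure Ω} {ν : Measure Ω'} {Y : Ω → H}
    {Y' : Ω' → H} (hY : Measurable Y) (hY' : Measurable Y')
    (h : ∀ x, μ (Y ⁻¹' {x}) = ν (Y' ⁻¹' {x})) : IdentDistrib Y Y' μ ν where
  aemeasurable_fst := hY.aemeasurable
  aemeasurable_snd := hY'.aemeasurable
  map_eq := Measure.ext_iff_singleton.2 fun x => by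
    rw [Measure.map_apply hY (measurableSet_singleton x),
      Measure.map_apply hY' (measurableSet_singleton x), h]

lemma lintegral_comp_eq_tsum {μ : Measure Ω} {Y : Ω → H} (hY : Measurable Y) (f : H → ℝ≥0∞) :
    ∫⁻ ω, f (Y ω) ∂μ = ∑' x, f x * μ (Y ⁻¹' {x}) := by
  rw [← lintegral_map (measurable_of_countable f) hY, lintegral_countable']
  congr with x
  rw [Measure.map_apply hY (measurableSet_singleton x)]

end Countable

section TimeWeighted

variable {H : Type*} {p : H → ℝ≥0} {T : H → ℝ}

lemma tsum_div_pos_of_one_le (hp : Summable p) (hT : ∀ h, 1 ≤ T h) {h₀ : H} (hh₀ : 0 < p h₀) :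
    0 < ∑' h, (p h : ℝ) / T h := by
  have hT0 : ∀ h, 0 < T h := fun h => zero_lt_one.trans_le (hT h)
  refine Summable.tsum_pos ?_ (fun h => div_nonneg (p h).2 (hT0 h).le) h₀ (div_pos hh₀ (hT0 h₀))
  exact (NNReal.summable_coe.2 hp).of_nonneg_of_le (fun h => div_nonneg (p h).2 (hT0 h).le)
    fun h => div_le_self (p h).2 (hT h)

lemma lintegral_ofReal_time_eq_inv {Ω : Type*} [MeasurableSpace Ω] [MeasurableSpace H]
    [Countable H] [MeasurableSingletonClass H] {P : Measure Ω} (hp : ∑' h, p h = 1)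
    (hT : ∀ h, 0 < T h) {Z : ℝ} (hZ : 0 ≤ Z) {Y : Ω → H} (hY : Measurable Y)
    (hdist : ∀ h, P (Y ⁻¹' {h}) = ENNReal.ofReal (p h / (Z * T h))) :
    ∫⁻ ω, ENNReal.ofReal (T (Y ω)) ∂P = ENNReal.ofReal Z⁻¹ := by
  have hp_summable : Summable p := summable_of_tsum_ne_zero (hp ▸ one_ne_zero)
  have hmul : ∀ h, T h * (p h / (Z * T h)) = p h / Z := fun h => by
    rw [← mul_div_assoc, mul_comm Z, mul_div_mul_left _ _ (hT h).ne']
  rw [lintegral_comp_eq_tsum hY fun h => ENNReal.ofReal (T h)]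
  simp_rw [hdist, ← ENNReal.ofReal_mul (hT _).le, hmul]
  rw [← ENNReal.ofReal_tsum_of_nonneg (f := fun h => (p h : ℝ) / Z)
      (fun h => div_nonneg (p h).2 hZ) ((NNReal.summable_coe.2 hp_summable).div_const Z),
    tsum_div_const, ← NNReal.coe_tsum, hp, NNReal.coe_one, one_div]

end TimeWeighted

/-- **Time-weighted sampling.** Let `H` be countable, `p : H → ℝ≥0` a probability mass
function (`∑' h, p h = 1`), and `T : H → ℝ` with `T h ≥ 1`. Set `Z = ∑' h, p h / T h` and
let `q h = p h / (Z · T h)` be the time-weighted distribution. Let `(Xᵢ)` be an i.i.d.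
sequence with law `q` on a probability space, fix `h⋆` with `p h⋆ > 0`, and let
`N ω = sInf {i | Xᵢ ω = hstar}` be the first hitting time of `hstar` (almost surely finite).
Then the expected total time until `hstar` is first sampled is
`E[∑_{i=0}^{N} T(Xᵢ)] = T(hstar) / p(hstar)`. -/
theorem time_weighted_sampling {H : Type*} [Countable H]
    [MeasurableSpace H] [MeasurableSingletonClass H]
    (p : H → NNReal) (hp : ∑' h : H, p h = 1)
    (T : H → ℝ) (hT : ∀ h, 1 ≤ T h)
    (Z : ℝ) (hZ : Z = ∑' h : H, (p h : ℝ) / T h)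
    (q : H → ℝ) (hq : ∀ h, q h = (p h : ℝ) / (Z * T h))
    {Ω : Type*} [MeasurableSpace Ω] (P : Measure Ω) [IsProbabilityMeasure P]
    (X : ℕ → Ω → H) (hmeas : ∀ i, Measurable (X i))
    (hindep : iIndepFun X P)
    (hdist : ∀ i h, P {ω | X i ω = h} = ENNReal.ofReal (q h))
    (hstar : H) (hpos : 0 < p hstar)
    (N : Ω → ℕ) (hN : ∀ ω, N ω = sInf {i : ℕ | X i ω = hstar}) :
    (∫ ω, ∑ i ∈ Finset.range (N ω + 1), T (X i ω) ∂P) = T hstar / (p hstar : ℝ) := by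
  obtain rfl : N = firstHit X {hstar} := funext hN
  have hT0 : ∀ h, 0 < T h := fun h => zero_lt_one.trans_le (hT h)
  have hlaw : ∀ i h, P (X i ⁻¹' {h}) = ENNReal.ofReal (q h) := hdist
  have hp_summable : Summable p := summable_of_tsum_ne_zero (hp ▸ one_ne_zero)
  have hZ0 : 0 < Z := hZ ▸ tsum_div_pos_of_one_le hp_summable hT hpos
  have hq_pos : 0 < q hstar := by rw [hq]; exact div_pos hpos (mul_pos hZ0 (hT0 hstar))
  have hident : ∀ i, IdentDistrib (X i) (X 0) P P := fun i =>
    identDistrib_of_measure_preimage_singleton (hmeas i) (hmeas 0) fun h =>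
      (hlaw i h).trans (hlaw 0 h).symm
  have hsum_meas : Measurable fun ω => ∑ i ∈ range (firstHit X {hstar} ω + 1), T (X i ω) :=
    measurable_sum_range_succ_of_measurable_bound
      (measurable_firstHit hmeas (measurableSet_singleton hstar))
      fun i => (measurable_of_countable T).comp (hmeas i)
  rw [integral_eq_lintegral_of_nonneg_ae (ae_of_all _ fun ω => sum_nonneg fun i _ => (hT0 _).le)
    hsum_meas.aestronglyMeasurable]
  simp_rw [ENNReal.ofReal_sum_of_nonneg fun i _ => (hT0 (X i _)).le]
  rw [lintegral_sum_range_firstHit_succ hmeas hindep hident (measurableSet_singleton hstar)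
      ((hlaw 0 hstar).trans_ne (ENNReal.ofReal_pos.2 hq_pos).ne')
      (measurable_of_countable fun h => ENNReal.ofReal (T h)),
    lintegral_ofReal_time_eq_inv hp hT0 hZ0.le (hmeas 0) fun h => (hlaw 0 h).trans (by rw [hq]),
    hlaw 0 hstar, ← ENNReal.ofReal_div_of_pos hq_pos, ENNReal.toReal_ofReal (by positivity), hq]
  field_simp
end

section
/- Santa Fe / Zipf unique-facts asymptotic: Let β ∈ (0,1), let c = ( ∑'_{k≥1} (k:ℝ)^(−1/β) )⁻¹ (so that p_k = c·k^(−1/β) defines a probability distribution on the positive integers with every p_k ≤ 1). Then the expected number of unique facts U(n) = ∑'_{k≥1} (1 − (1 − p_k)^n) satisfies lim_{n→∞} U(n)/n^β = c^β · Γ(1 − β), where Γ is the real Gamma function. In particular U(n) grows like a constant times n^β, which yields the generalized Hilberg scaling of the Santa Fe process. -/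
/-!
Write `coverage n t = 1 - (1 - t)ⁿ`, so that `U(n) = ∑ₖ F(k)` for `F(x) = coverage n (c x^(-1/β))`.
Since `F` is antitone with values in `[0, 1]`, the integral test gives `|U(n) - ∫₀^∞ F| ≤ 1`.
The substitution `x ↦ n^β x` turns `∫₀^∞ F` into `n^β ∫₀^∞ coverage n ((c/n) x^(-1/β)) dx`, and
since `(1 - t/n)ⁿ → e^(-t)`, dominated convergence (dominant `min 1 (c x^(-1/β))`) sends the last
integral to `∫₀^∞ (1 - exp (-c x^(-1/β))) dx`. Rescaling and substituting `x = y^(-β)` reduce this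
to `c^β β ∫₀^∞ (1 - e^(-y)) y^(-β-1) dy = c^β Γ(1 - β)`, by the Cauchy–Saalschütz formula
`Γ(s) = ∫₀^∞ (e^(-y) - 1) y^(s-1) dy` for `-1 < s < 0` (integration by parts) at `s = -β`.
-/

open Filter MeasureTheory Set Real Topology

lemma one_le_tsum_pnat_rpow {s : ℝ} (hs : s < -1) : 1 ≤ ∑' k : ℕ+, (k : ℝ) ^ s := by
  have summable : Summable fun k : ℕ+ ↦ (k : ℝ) ^ s := (summable_nat_rpow.2 hs).subtype _
  simpa using summable.le_tsum 1 fun k _ ↦ rpow_nonneg (k : ℕ).cast_nonneg s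

lemma integrableOn_Ioi_of_le_rpow {f : ℝ → ℝ} {a b C D : ℝ} (ha : -1 < a) (hb : b < -1)
    (hf : AEStronglyMeasurable f (volume.restrict (Ioi 0)))
    (h_zero : ∀ x ∈ Ioc 0 1, ‖f x‖ ≤ C * x ^ a) (h_infty : ∀ x ∈ Ioi 1, ‖f x‖ ≤ D * x ^ b) :
    IntegrableOn f (Ioi 0) := by
  rw [← Ioc_union_Ioi_eq_Ioi zero_le_one]
  refine IntegrableOn.union ?_ ?_
  · refine Integrable.mono' (((intervalIntegral.intervalIntegrable_rpow' ha).1).const_mul C)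
      (hf.mono_set Ioc_subset_Ioi_self) ?_
    exact (ae_restrict_iff' measurableSet_Ioc).2 (.of_forall h_zero)
  · refine Integrable.mono' ((integrableOn_Ioi_rpow_of_lt hb zero_lt_one).const_mul D)
      (hf.mono_set (Ioi_subset_Ioi zero_le_one)) ?_
    exact (ae_restrict_iff' measurableSet_Ioi).2 (.of_forall h_infty)

lemma AntitoneOn.abs_tsum_pnat_sub_integral_Ioi_le_one {f : ℝ → ℝ} (anti : AntitoneOn f (Ici 1))
    (integrable : IntegrableOn f (Ioi 0)) (mem : ∀ x ∈ Ioi 0, f x ∈ Icc 0 1) :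
    |∑' k : ℕ+, f k - ∫ x in Ioi 0, f x| ≤ 1 := by
  have nonneg : ∀ x ∈ Ioi ((1 : ℕ) : ℝ), 0 ≤ f x := fun x hx ↦
    (mem x (lt_trans zero_lt_one (by simpa using hx))).1
  have anti' : AntitoneOn f (Ici ((1 : ℕ) : ℝ)) := by simpa using anti
  have integrable' : IntegrableOn f (Ioi ((1 : ℕ) : ℝ)) :=
    integrable.mono_set (Ioi_subset_Ioi (by simp))
  have summable := anti'.summable_of_integrableOn_Ioi integrable' nonneg
  have lower := anti'.integral_le_tsum_comp_add 1 summable nonneg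
  have upper := anti'.tsum_comp_add_le_integral 1 integrable' nonneg
  have split_sum : ∑' n : ℕ, f (n + 1 : ℕ) = f 1 + ∑' n : ℕ, f (n + 1 + 1 : ℕ) := by
    simpa using ((summable_nat_add_iff 1).2 summable).tsum_eq_zero_add
  have split_integral : ∫ x in Ioi 0, f x = (∫ x in Ioc 0 1, f x) + ∫ x in Ioi 1, f x := by
    rw [← Ioc_union_Ioi_eq_Ioi zero_le_one, setIntegral_union Ioc_disjoint_Ioi_same
      measurableSet_Ioi (integrable.mono_set Ioc_subset_Ioi_self) (by simpa using integrable')]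
  have head_nonneg : 0 ≤ ∫ x in Ioc 0 1, f x :=
    setIntegral_nonneg measurableSet_Ioc fun x hx ↦ (mem x hx.1).1
  have head_le_one : ∫ x in Ioc 0 1, f x ≤ 1 := by
    have : ∫ x in Ioc (0 : ℝ) 1, f x ≤ ∫ x in Ioc (0 : ℝ) 1, 1 :=
      setIntegral_mono_on (integrable.mono_set Ioc_subset_Ioi_self)
        (integrableOn_const (by simp) (by simp)) measurableSet_Ioc fun x hx ↦ (mem x hx.1).2
    simpa using this
  have f_one_le_one : f 1 ≤ 1 := (mem 1 (mem_Ioi.2 zero_lt_one)).2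
  rw [tsum_pnat_eq_tsum_succ (f := fun n : ℕ ↦ f n), abs_le]
  push_cast at lower upper split_sum ⊢
  constructor <;> linarith

lemma integral_comp_mul_rpow_neg_inv {E : Type*} [NormedAddCommGroup E] [NormedSpace ℝ E]
    (φ : ℝ → E) {β : ℝ} (hβ : 0 < β) (c : ℝ) {a : ℝ} (ha : 0 < a) :
    ∫ x in Ioi 0, φ (c * x ^ (-1 / β)) = a ^ β • ∫ x in Ioi 0, φ (c / a * x ^ (-1 / β)) := by
  have haβ : 0 < a ^ β := rpow_pos_of_pos ha β
  have rescale : ∀ x ∈ Ioi (0 : ℝ), c * (a ^ β * x) ^ (-1 / β) = c / a * x ^ (-1 / β) := by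
    intro x hx
    rw [mul_rpow haβ.le (le_of_lt hx), ← rpow_mul ha.le, mul_div_cancel₀ (-1) hβ.ne', rpow_neg_one]
    ring
  have := integral_comp_mul_left_Ioi (fun x ↦ φ (c * x ^ (-1 / β))) 0 haβ
  rw [mul_zero, setIntegral_congr_fun measurableSet_Ioi fun x hx ↦ congrArg φ (rescale x hx)]
    at this
  rw [this, smul_smul, mul_inv_cancel₀ haβ.ne', one_smul]

lemma abs_exp_neg_sub_one_le {x : ℝ} (hx : 0 ≤ x) : |exp (-x) - 1| ≤ min x 1 := by
  rw [abs_of_nonpos (by simpa using hx)]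
  exact le_min (by linarith [one_sub_le_exp_neg x]) (by linarith [exp_pos (-x)])

lemma integrableOn_exp_neg_sub_one_mul_rpow {s : ℝ} (hs₁ : -1 < s) (hs₀ : s < 0) :
    IntegrableOn (fun x ↦ (exp (-x) - 1) * x ^ (s - 1)) (Ioi 0) := by
  refine integrableOn_Ioi_of_le_rpow (b := s - 1) (C := 1) (D := 1) hs₁ (by linarith)
    (by fun_prop) (fun x hx ↦ ?_) (fun x hx ↦ ?_)
  · have hx₀ : 0 < x := hx.1
    calc ‖(exp (-x) - 1) * x ^ (s - 1)‖ ≤ x * x ^ (s - 1) := by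
          rw [norm_mul, norm_of_nonneg (rpow_nonneg hx₀.le _)]
          exact mul_le_mul_of_nonneg_right ((abs_exp_neg_sub_one_le hx₀.le).trans
            (min_le_left _ _)) (rpow_nonneg hx₀.le _)
      _ = 1 * x ^ s := by rw [rpow_sub_one hx₀.ne']; field_simp
  · have hx₀ : 0 < x := zero_lt_one.trans hx
    rw [norm_mul, norm_of_nonneg (rpow_nonneg hx₀.le _)]
    exact mul_le_mul_of_nonneg_right ((abs_exp_neg_sub_one_le hx₀.le).trans
      (min_le_right _ _)) (rpow_nonneg hx₀.le _)

lemma Real.Gamma_eq_integral_exp_neg_sub_one_mul_rpow {s : ℝ} (hs₁ : -1 < s) (hs₀ : s < 0) :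
    Gamma s = ∫ x in Ioi 0, (exp (-x) - 1) * x ^ (s - 1) := by
  have u_deriv : ∀ x ∈ Ioi (0 : ℝ), HasDerivAt (fun x ↦ exp (-x) - 1) (-exp (-x)) x := fun x _ ↦ by
    simpa using ((hasDerivAt_neg x).exp).sub_const 1
  have v_deriv : ∀ x ∈ Ioi (0 : ℝ), HasDerivAt (fun x ↦ x ^ s / s) (x ^ (s - 1)) x := fun x hx ↦ by
    simpa [hs₀.ne] using (hasDerivAt_rpow_const (p := s) (Or.inl (ne_of_gt hx))).div_const s
  have integrable_uv' := integrableOn_exp_neg_sub_one_mul_rpow hs₁ hs₀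
  have integrable_u'v : IntegrableOn (fun x ↦ -exp (-x) * (x ^ s / s)) (Ioi 0) := by
    have gamma : IntegrableOn (fun x ↦ exp (-x) * x ^ (s + 1 - 1) * (-1 / s)) (Ioi 0) :=
      (GammaIntegral_convergent (by linarith)).mul_const _
    refine gamma.congr_fun (fun x _ ↦ ?_) measurableSet_Ioi
    simp only [add_sub_cancel_right]
    ring
  have at_zero : Tendsto (fun x ↦ (exp (-x) - 1) * (x ^ s / s)) (𝓝[>] 0) (𝓝 0) := by
    have hcont := (continuousAt_rpow_const 0 (s + 1) (Or.inr (by linarith))).tendsto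
    rw [zero_rpow (by linarith)] at hcont
    have bound : Tendsto (fun x : ℝ ↦ x ^ (s + 1) / |s|) (𝓝[>] 0) (𝓝 0) := by
      simpa using (tendsto_nhdsWithin_of_tendsto_nhds hcont).div_const |s|
    refine squeeze_zero_norm' ?_ bound
    filter_upwards [self_mem_nhdsWithin] with x (hx : 0 < x)
    rw [norm_mul, norm_div, norm_of_nonneg (rpow_nonneg hx.le _), rpow_add_one hx.ne',
      Real.norm_eq_abs, Real.norm_eq_abs]
    calc |exp (-x) - 1| * (x ^ s / |s|) ≤ x * (x ^ s / |s|) :=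
          mul_le_mul_of_nonneg_right ((abs_exp_neg_sub_one_le hx.le).trans (min_le_left _ _))
            (by positivity)
      _ = x ^ s * x / |s| := by ring
  have at_top : Tendsto (fun x ↦ (exp (-x) - 1) * (x ^ s / s)) atTop (𝓝 0) := by
    have hpow : Tendsto (fun x : ℝ ↦ x ^ s) atTop (𝓝 0) := by
      simpa using tendsto_rpow_neg_atTop (y := -s) (by linarith)
    simpa using (tendsto_exp_neg_atTop_nhds_zero.sub_const 1).mul (hpow.div_const s)
  rw [integral_Ioi_mul_deriv_eq_deriv_mul u_deriv v_deriv integrable_uv' integrable_u'v at_zero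
    at_top]
  have gamma_succ : ∫ x in Ioi 0, -exp (-x) * (x ^ s / s) = -(Gamma (s + 1) / s) := by
    rw [Gamma_eq_integral (by linarith), ← integral_div, ← integral_neg]
    congr 1 with x
    rw [add_sub_cancel_right]
    ring
  rw [gamma_succ, Gamma_add_one hs₀.ne, mul_div_cancel_left₀ _ hs₀.ne]
  ring

lemma neg_one_div_lt_neg_one {β : ℝ} (hβ₀ : 0 < β) (hβ₁ : β < 1) : -1 / β < -1 := by
  rw [div_lt_iff₀ hβ₀]
  linarith

lemma integral_one_sub_exp_neg_rpow {β : ℝ} (hβ₀ : 0 < β) (hβ₁ : β < 1) :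
    ∫ y in Ioi 0, (1 - exp (-y ^ (-1 / β))) = Gamma (1 - β) := by
  have subst := integral_comp_rpow_Ioi (fun y ↦ 1 - exp (-y ^ (-1 / β))) (p := -β) (by linarith)
  have inner : ∀ x ∈ Ioi (0 : ℝ), (x ^ (-β)) ^ (-1 / β) = x := fun x hx ↦ by
    rw [← rpow_mul (le_of_lt hx), show -β * (-1 / β) = 1 by field_simp, rpow_one]
  have recurrence : Gamma (1 - β) = -β * Gamma (-β) := by
    rw [← Gamma_add_one (by linarith), neg_add_eq_sub]
  rw [recurrence, Real.Gamma_eq_integral_exp_neg_sub_one_mul_rpow (by linarith) (by linarith),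
    ← integral_const_mul, ← subst]
  refine setIntegral_congr_fun measurableSet_Ioi fun x hx ↦ ?_
  rw [inner x hx, abs_neg, abs_of_pos hβ₀, smul_eq_mul]
  ring

lemma integral_one_sub_exp_neg_mul_rpow {β : ℝ} (hβ₀ : 0 < β) (hβ₁ : β < 1) {c : ℝ} (hc : 0 < c) :
    ∫ y in Ioi 0, (1 - exp (-(c * y ^ (-1 / β)))) = c ^ β * Gamma (1 - β) := by
  have := integral_comp_mul_rpow_neg_inv (fun t ↦ 1 - exp (-t)) hβ₀ c hc
  simp only [div_self hc.ne', one_mul, smul_eq_mul] at this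
  rw [this, integral_one_sub_exp_neg_rpow hβ₀ hβ₁]

namespace SantaFe

/-- The probability that an event of probability `t` occurs in `n` independent trials, clipped so
that it is monotone in `t` on all of `ℝ`. -/
noncomputable def coverage (n : ℕ) (t : ℝ) : ℝ :=
  1 - max 0 (1 - t) ^ n

variable {n : ℕ} {t : ℝ}

lemma coverage_le_one : coverage n t ≤ 1 :=
  sub_le_self _ (pow_nonneg (le_max_left _ _) n)

lemma coverage_nonneg (ht : 0 ≤ t) : 0 ≤ coverage n t :=
  sub_nonneg.2 (pow_le_one₀ (le_max_left _ _) (max_le zero_le_one (by linarith)))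

lemma coverage_le_mul : coverage n t ≤ n * t := by
  have hbern := one_add_mul_le_pow (a := max 0 (1 - t) - 1) (by linarith [le_max_left 0 (1 - t)]) n
  have hbase : -t ≤ max 0 (1 - t) - 1 := by linarith [le_max_right 0 (1 - t)]
  have := mul_le_mul_of_nonneg_left hbase (Nat.cast_nonneg n)
  simp only [add_sub_cancel] at hbern
  rw [coverage]
  linarith

lemma coverage_of_le_one (ht : t ≤ 1) : coverage n t = 1 - (1 - t) ^ n := by
  rw [coverage, max_eq_right (by linarith)]

lemma monotone_coverage (n : ℕ) : Monotone (coverage n) := fun _ _ h ↦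
  sub_le_sub_left (pow_le_pow_left₀ (le_max_left _ _) (max_le_max le_rfl (by linarith)) n) 1

lemma continuous_coverage (n : ℕ) : Continuous (coverage n) := by
  unfold coverage
  fun_prop

lemma tendsto_coverage_div (t : ℝ) :
    Tendsto (fun n : ℕ ↦ coverage n (t / n)) atTop (𝓝 (1 - exp (-t))) := by
  refine (tendsto_const_nhds.sub (tendsto_one_add_div_pow_exp (-t))).congr' ?_
  filter_upwards [eventually_ge_atTop ⌈t⌉₊, eventually_ge_atTop 1] with n htn hn
  have hn0 : (0 : ℝ) < n := by exact_mod_cast hn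
  rw [coverage_of_le_one ((div_le_one hn0).2 ((Nat.le_ceil t).trans (by exact_mod_cast htn))),
    neg_div, ← sub_eq_add_neg]

variable {c s : ℝ}

lemma antitoneOn_coverage_mul_rpow (n : ℕ) (hc : 0 ≤ c) (hs : s ≤ 0) :
    AntitoneOn (fun x ↦ coverage n (c * x ^ s)) (Ioi 0) := fun _ hx _ _ hxy ↦
  monotone_coverage n (mul_le_mul_of_nonneg_left (rpow_le_rpow_of_nonpos hx hxy hs) hc)

lemma integrableOn_coverage_mul_rpow (n : ℕ) (hc : 0 ≤ c) (hs : s < -1) :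
    IntegrableOn (fun x ↦ coverage n (c * x ^ s)) (Ioi 0) := by
  refine integrableOn_Ioi_of_le_rpow (a := 0) (C := 1) (D := n * c) (by norm_num) hs
    ((continuous_coverage n).comp_aestronglyMeasurable (by fun_prop)) ?_ ?_
  all_goals
    intro x hx
    have ht : 0 ≤ c * x ^ s := mul_nonneg hc (rpow_nonneg (by simp at hx; linarith) s)
    rw [norm_of_nonneg (coverage_nonneg ht)]
  · simpa using coverage_le_one
  · simpa [mul_assoc] using coverage_le_mul (n := n) (t := c * x ^ s)

lemma abs_tsum_coverage_sub_integral_le_one (n : ℕ) (hc : 0 ≤ c) (hs : s < -1) :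
    |∑' k : ℕ+, coverage n (c * (k : ℝ) ^ s) - ∫ x in Ioi 0, coverage n (c * x ^ s)| ≤ 1 :=
  ((antitoneOn_coverage_mul_rpow n hc (by linarith)).mono (Ici_subset_Ioi.2 zero_lt_one))
    |>.abs_tsum_pnat_sub_integral_Ioi_le_one (integrableOn_coverage_mul_rpow n hc hs)
      fun x hx ↦ ⟨coverage_nonneg (mul_nonneg hc (rpow_nonneg (le_of_lt hx) s)), coverage_le_one⟩

lemma tendsto_integral_coverage_div_mul_rpow (hc : 0 ≤ c) (hs : s < -1) :
    Tendsto (fun n : ℕ ↦ ∫ x in Ioi 0, coverage n (c / n * x ^ s)) atTop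
      (𝓝 (∫ x in Ioi 0, (1 - exp (-(c * x ^ s))))) := by
  refine tendsto_integral_of_dominated_convergence (fun x ↦ min 1 (c * x ^ s))
    (fun n ↦ (continuous_coverage n).comp_aestronglyMeasurable (by fun_prop)) ?_ (fun n ↦ ?_) ?_
  · refine integrableOn_Ioi_of_le_rpow (a := 0) (C := 1) (D := c) (by norm_num) hs
      (by fun_prop) ?_ ?_
    all_goals
      intro x hx
      have hx₀ : 0 ≤ x ^ s := rpow_nonneg (by simp at hx; linarith) s
      rw [norm_of_nonneg (le_min zero_le_one (mul_nonneg hc hx₀))]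
    · simp
    · exact min_le_right _ _
  · refine (ae_restrict_iff' measurableSet_Ioi).2 (.of_forall fun x (hx : 0 < x) ↦ ?_)
    have ht : 0 ≤ c * x ^ s := mul_nonneg hc (rpow_nonneg hx.le s)
    rw [norm_of_nonneg (coverage_nonneg (by positivity))]
    refine le_min coverage_le_one (coverage_le_mul.trans ?_)
    rcases n.eq_zero_or_pos with rfl | hn
    · simpa using ht
    · rw [← mul_assoc, mul_div_cancel₀ c (by positivity)]
  · refine .of_forall fun x ↦ ?_
    simpa only [div_mul_eq_mul_div] using tendsto_coverage_div (c * x ^ s)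

lemma tendsto_tsum_coverage_div_rpow {β : ℝ} (hβ₀ : 0 < β) (hβ₁ : β < 1) (hc : 0 < c) :
    Tendsto (fun n : ℕ ↦ (∑' k : ℕ+, coverage n (c * (k : ℝ) ^ (-1 / β))) / (n : ℝ) ^ β) atTop
      (𝓝 (c ^ β * Gamma (1 - β))) := by
  have hs := neg_one_div_lt_neg_one hβ₀ hβ₁
  set I := fun n : ℕ ↦ ∫ x in Ioi 0, coverage n (c * x ^ (-1 / β))
  set J := fun n : ℕ ↦ ∫ x in Ioi 0, coverage n (c / n * x ^ (-1 / β))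
  have scaling (n : ℕ) (hn : 0 < n) : I n = (n : ℝ) ^ β * J n :=
    integral_comp_mul_rpow_neg_inv (coverage n) hβ₀ c (Nat.cast_pos.2 hn)
  have limit : Tendsto J atTop (𝓝 (c ^ β * Gamma (1 - β))) := by
    simpa only [integral_one_sub_exp_neg_mul_rpow hβ₀ hβ₁ hc]
      using tendsto_integral_coverage_div_mul_rpow hc.le hs
  have error : Tendsto (fun n : ℕ ↦
      ((∑' k : ℕ+, coverage n (c * (k : ℝ) ^ (-1 / β))) - I n) / (n : ℝ) ^ β) atTop (𝓝 0) := by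
    refine squeeze_zero_norm (fun n ↦ ?_)
      ((tendsto_rpow_atTop hβ₀).comp tendsto_natCast_atTop_atTop).inv_tendsto_atTop
    have hpow : 0 ≤ (n : ℝ) ^ β := rpow_nonneg n.cast_nonneg β
    rw [norm_div, norm_of_nonneg hpow, Real.norm_eq_abs, ← one_div]
    exact div_le_div_of_nonneg_right (abs_tsum_coverage_sub_integral_le_one n hc.le hs) hpow
  rw [← add_zero (c ^ β * Gamma (1 - β))]
  refine (limit.add error).congr' ?_
  filter_upwards [eventually_gt_atTop 0] with n hn
  have hpow : (n : ℝ) ^ β ≠ 0 := (rpow_pos_of_pos (Nat.cast_pos.2 hn) β).ne'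
  simp only [scaling n hn]
  field_simp
  ring

end SantaFe

open SantaFe in
/-- **Santa Fe / Zipf unique-facts asymptotic.** Let `β ∈ (0,1)` and let
`c = (∑'_{k≥1} k^(−1/β))⁻¹`, so that `p_k = c·k^(−1/β)` is a probability distribution on
the positive integers. Then the expected number of unique facts
`U(n) = ∑'_{k≥1} (1 − (1 − p_k)^n)` satisfies `lim_{n→∞} U(n)/n^β = c^β · Γ(1 − β)`. -/
theorem santaFe_unique_facts_asymptotic (β : ℝ) (hβ0 : 0 < β) (hβ1 : β < 1)
    (c : ℝ) (hc : c = (∑' k : ℕ+, ((k : ℝ)) ^ (-1 / β))⁻¹)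
    (p : ℕ+ → ℝ) (hp : ∀ k : ℕ+, p k = c * ((k : ℝ)) ^ (-1 / β))
    (U : ℕ → ℝ) (hU : ∀ n : ℕ, U n = ∑' k : ℕ+, (1 - (1 - p k) ^ n)) :
    Tendsto (fun n : ℕ => U n / (n : ℝ) ^ β) atTop
      (nhds (c ^ β * Real.Gamma (1 - β))) := by
  have hs := neg_one_div_lt_neg_one hβ0 hβ1
  have normalizer := one_le_tsum_pnat_rpow hs
  have hc₀ : 0 < c := hc ▸ inv_pos.2 (one_pos.trans_le normalizer)
  have hc₁ : c ≤ 1 := hc ▸ inv_le_one_of_one_le₀ normalizer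
  have hp_le_one (k : ℕ+) : p k ≤ 1 := by
    rw [hp, ← mul_one 1]
    exact mul_le_mul hc₁ (rpow_le_one_of_one_le_of_nonpos (Nat.one_le_cast.2 k.pos) (by linarith))
      (rpow_nonneg (k : ℕ).cast_nonneg _) zero_le_one
  have hU_coverage (n : ℕ) : U n = ∑' k : ℕ+, coverage n (c * (k : ℝ) ^ (-1 / β)) := by
    simp only [hU, ← hp, coverage_of_le_one (hp_le_one _)]
  simpa only [hU_coverage] using tendsto_tsum_coverage_div_rpow hβ0 hβ1 hc₀
end
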